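/- arXiv:1808.03219 — 4 statements merged into one kernel-verified Lean document; each statement's English description precedes it below -/
import Mathlib

section
/- Suppose E is a real Banach space, Q is a bounded symmetric positive definite bilinear form on E, and E = E₁ ⊕ E₂ is a splitting into Q-orthogonal subspaces. If E₁ is finite dimensional, then the projection P₁ : E → E₁ along E₂ is a bounded (continuous) linear map, and hence so is P₂(x) = x − P₁(x). -/
/-!
The projection `P₁` is recovered from the finitely many bounded functionals
`x ↦ Q (b i) x`, `b` a basis of `E₁`: they vanish on `E₂` by orthogonality, and they separate
the points of `E₁` by definiteness. So `P₁` factors as a continuous map into `ℝⁿ` followed by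
a linear map out of the finite-dimensional space `ℝⁿ`, which is automatically continuous.
-/

/-- The `Q`-norm `‖x‖_Q = √(Q x x)` associated to a bilinear form `Q`. -/
noncomputable def normQ {E : Type*} [AddCommGroup E] [Module ℝ E]
    (Q : E →ₗ[ℝ] E →ₗ[ℝ] ℝ) (x : E) : ℝ :=
  Real.sqrt (Q x x)

theorem LinearMap.continuous_of_comp_eq_of_injOn {𝕜 E W : Type*} [NontriviallyNormedField 𝕜]
    [CompleteSpace 𝕜] [AddCommGroup E] [Module 𝕜 E] [TopologicalSpace E]
    [IsTopologicalAddGroup E] [ContinuousSMul 𝕜 E] [AddCommGroup W] [Module 𝕜 W]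
    [TopologicalSpace W] [IsTopologicalAddGroup W] [ContinuousSMul 𝕜 W] [T2Space W]
    [FiniteDimensional 𝕜 W] (V : Submodule 𝕜 E) (P : E →ₗ[𝕜] E) (F : E →ₗ[𝕜] W)
    (hF : Continuous F) (hPV : ∀ x, P x ∈ V) (hFP : ∀ x, F (P x) = F x)
    (hFV : ∀ v ∈ V, F v = 0 → v = 0) : Continuous P := by
  have hker : LinearMap.ker (F ∘ₗ V.subtype) = ⊥ :=
    LinearMap.ker_eq_bot'.2 fun v hv => Subtype.ext (hFV v v.2 hv)
  obtain ⟨G, hG⟩ := (F ∘ₗ V.subtype).exists_leftInverse_of_injective hker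
  have hP : ⇑P = V.subtype ∘ G ∘ F := by
    funext x
    have := LinearMap.congr_fun hG ⟨P x, hPV x⟩
    simp only [LinearMap.comp_apply, Submodule.subtype_apply, hFP, LinearMap.id_apply] at this
    simp [this]
  rw [hP]
  exact continuous_subtype_val.comp (G.continuous_of_finiteDimensional.comp hF)

theorem LinearMap.eq_zero_of_forall_basis_apply_eq_zero {E ι : Type*} [Fintype ι]
    [AddCommGroup E] [Module ℝ E] (Q : E →ₗ[ℝ] E →ₗ[ℝ] ℝ) (hQpos : ∀ x : E, x ≠ 0 → 0 < Q x x)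
    {V : Submodule ℝ E} (b : Module.Basis ι ℝ V) {v : E} (hv : v ∈ V)
    (h : ∀ i, Q (b i) v = 0) : v = 0 := by
  have hsum : ∑ i, b.repr ⟨v, hv⟩ i • (b i : E) = v := by
    simpa only [Submodule.coe_sum, Submodule.coe_smul] using
      congrArg Subtype.val (b.sum_repr ⟨v, hv⟩)
  have hQvv : Q v v = 0 := by
    nth_rw 1 [← hsum]
    simp [h]
  by_contra hne
  exact (hQpos v hne).ne' hQvv

theorem LinearMap.continuous_apply_of_bound {E : Type*} [NormedAddCommGroup E] [NormedSpace ℝ E]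
    (Q : E →ₗ[ℝ] E →ₗ[ℝ] ℝ) (C : ℝ) (hQbd : ∀ x y : E, |Q x y| ≤ C * ‖x‖ * ‖y‖) (a : E) :
    Continuous (Q a) :=
  AddMonoidHomClass.continuous_of_bound (Q a) (C * ‖a‖) fun x => hQbd a x

theorem stmt1_general {E : Type*} [NormedAddCommGroup E] [NormedSpace ℝ E]
    (Q : E →ₗ[ℝ] E →ₗ[ℝ] ℝ)
    (hQpos : ∀ x : E, x ≠ 0 → 0 < Q x x)
    (C_Q : ℝ)
    (hQbd : ∀ x y : E, |Q x y| ≤ C_Q * ‖x‖ * ‖y‖)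
    (E₁ E₂ : Submodule ℝ E)
    (horth : ∀ a ∈ E₁, ∀ b ∈ E₂, Q a b = 0)
    (P₁ P₂ : E →ₗ[ℝ] E)
    (hP₁mem : ∀ x : E, P₁ x ∈ E₁) (hP₂mem : ∀ x : E, P₂ x ∈ E₂)
    (hPsum : ∀ x : E, P₁ x + P₂ x = x)
    [FiniteDimensional ℝ E₁] :
    Continuous P₁ ∧ Continuous P₂ := by
  let b := Module.finBasis ℝ E₁
  let F : E →ₗ[ℝ] Fin (Module.finrank ℝ E₁) → ℝ := LinearMap.pi fun i => Q (b i)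
  have hF : Continuous F := continuous_pi fun i => Q.continuous_apply_of_bound C_Q hQbd (b i)
  have hFP : ∀ x, F (P₁ x) = F x := fun x => funext fun i => by
    conv_rhs => rw [← hPsum x]
    simp [F, horth _ (b i).2 _ (hP₂mem x)]
  have hP₁ : Continuous P₁ := P₁.continuous_of_comp_eq_of_injOn E₁ F hF hP₁mem hFP
    fun v hv hFv => Q.eq_zero_of_forall_basis_apply_eq_zero hQpos b hv (congr_fun hFv)
  have hP₂ : ⇑P₂ = fun x => x - P₁ x := funext fun x => eq_sub_of_add_eq' (hPsum x)
  exact ⟨hP₁, hP₂ ▸ continuous_id.sub hP₁⟩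

/-- Suppose `E` is a real Banach space, `Q` is a bounded symmetric positive
definite bilinear form on `E`, and `E = E₁ ⊕ E₂` is a splitting into `Q`-orthogonal subspaces.
If `E₁` is finite dimensional, then the projection `P₁ : E → E₁` along `E₂` is a bounded
(continuous) linear map, and hence so is `P₂ x = x - P₁ x`. -/
theorem stmt1 {E : Type*} [NormedAddCommGroup E] [NormedSpace ℝ E] [CompleteSpace E]
    (Q : E →ₗ[ℝ] E →ₗ[ℝ] ℝ)
    (hQsymm : ∀ x y : E, Q x y = Q y x)
    (hQpos : ∀ x : E, x ≠ 0 → 0 < Q x x)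
    (C_Q : ℝ) (hCQpos : 0 < C_Q)
    (hQbd : ∀ x y : E, |Q x y| ≤ C_Q * ‖x‖ * ‖y‖)
    (E₁ E₂ : Submodule ℝ E)
    (hinf : E₁ ⊓ E₂ = ⊥) (hsup : E₁ ⊔ E₂ = ⊤)
    (horth : ∀ a ∈ E₁, ∀ b ∈ E₂, Q a b = 0)
    (P₁ P₂ : E →ₗ[ℝ] E)
    (hP₁mem : ∀ x : E, P₁ x ∈ E₁) (hP₂mem : ∀ x : E, P₂ x ∈ E₂)
    (hPsum : ∀ x : E, P₁ x + P₂ x = x)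
    [FiniteDimensional ℝ E₁] :
    Continuous P₁ ∧ Continuous P₂ :=
  stmt1_general Q hQpos C_Q hQbd E₁ E₂ horth P₁ P₂ hP₁mem hP₂mem hPsum
end

section
/- For all x, y in the open ball B_r = {x ∈ E : ‖x‖ < r}, one has ‖Ψ₁(x) − Ψ₁(y)‖_Q ≥ λ‖x₁ − y₁‖_Q − ε‖x − y‖_Q, where Ψ₁ = P₁ ∘ Ψ. -/
section aux
variable {E : Type*} [AddCommGroup E] [Module ℝ E]
  (Q : E →ₗ[ℝ] E →ₗ[ℝ] ℝ)
  (hQsymm : ∀ x y : E, Q x y = Q y x)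
  (hQnn : ∀ x : E, 0 ≤ Q x x)

include hQsymm hQnn in
lemma cs (u v : E) : (Q u v) ^ 2 ≤ Q u u * Q v v := by
  have h : ∀ t : ℝ, 0 ≤ (Q v v) * (t * t) + (2 * Q u v) * t + Q u u := by
    intro t
    have := hQnn (u + t • v)
    simp only [map_add, map_smul, LinearMap.add_apply, LinearMap.smul_apply, smul_eq_mul] at this
    rw [hQsymm v u] at this
    nlinarith [this]
  have := discrim_le_zero h
  rw [discrim] at this
  nlinarith

include hQsymm hQnn in
lemma normQ_sq (x : E) : normQ Q x ^ 2 = Q x x := Real.sq_sqrt (hQnn x)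

include hQsymm hQnn in
lemma normQ_triangle (u v : E) : normQ Q (u + v) ≤ normQ Q u + normQ Q v := by
  have h0 : ∀ x : E, 0 ≤ normQ Q x := fun x => Real.sqrt_nonneg _
  have hcs : Q u v ≤ normQ Q u * normQ Q v := by
    have hc := cs Q hQsymm hQnn u v
    have h1 : normQ Q u * normQ Q v = Real.sqrt (Q u u * Q v v) := by
      rw [normQ, normQ, Real.sqrt_mul (hQnn u)]
    calc Q u v ≤ |Q u v| := le_abs_self _
      _ = Real.sqrt ((Q u v) ^ 2) := (Real.sqrt_sq_eq_abs _).symm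
      _ ≤ Real.sqrt (Q u u * Q v v) := Real.sqrt_le_sqrt hc
      _ = normQ Q u * normQ Q v := h1.symm
  have hsq : normQ Q (u + v) ^ 2 ≤ (normQ Q u + normQ Q v) ^ 2 := by
    rw [normQ_sq Q hQsymm hQnn]
    simp only [map_add, LinearMap.add_apply]
    nlinarith [normQ_sq Q hQsymm hQnn u, normQ_sq Q hQsymm hQnn v, hQsymm u v]
  nlinarith [h0 (u + v), h0 u, h0 v]
end aux

/-- For all `x, y` in the open ball `B_r`, one has
`‖Ψ₁ x − Ψ₁ y‖_Q ≥ λ‖x₁ − y₁‖_Q − ε‖x − y‖_Q`, where `Ψ₁ = P₁ ∘ Ψ`. -/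
theorem stmt2
 {E : Type*} [NormedAddCommGroup E] [NormedSpace ℝ E] [CompleteSpace E]
    -- Q is a bounded symmetric positive definite bilinear form on E
    (Q : E →ₗ[ℝ] E →ₗ[ℝ] ℝ)
    (hQsymm : ∀ x y : E, Q x y = Q y x)
    (hQpos : ∀ x : E, x ≠ 0 → 0 < Q x x)
    (C_Q : ℝ) (hCQpos : 0 < C_Q)
    (hQbd : ∀ x y : E, |Q x y| ≤ C_Q * ‖x‖ * ‖y‖)
    -- E = E₁ ⊕ E₂ is a splitting into Q-orthogonal subspaces, with projections P₁, P₂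
    (E₁ E₂ : Submodule ℝ E)
    (hinf : E₁ ⊓ E₂ = ⊥) (hsup : E₁ ⊔ E₂ = ⊤)
    (horth : ∀ a ∈ E₁, ∀ b ∈ E₂, Q a b = 0)
    (P₁ P₂ : E →ₗ[ℝ] E)
    (hP₁mem : ∀ x : E, P₁ x ∈ E₁) (hP₂mem : ∀ x : E, P₂ x ∈ E₂)
    (hPsum : ∀ x : E, P₁ x + P₂ x = x)
    -- T is a bounded linear map preserving the splitting, expanding on E₁, contracting on E₂
    (T : E →L[ℝ] E)
    (hT₁ : ∀ x ∈ E₁, T x ∈ E₁) (hT₂ : ∀ x ∈ E₂, T x ∈ E₂)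
    (lam mu : ℝ) (hlam : 1 < lam) (hmu0 : 0 < mu) (hmulam : mu < lam)
    (hTexp : ∀ x ∈ E₁, lam * normQ Q x ≤ normQ Q (T x))
    (hTcon : ∀ x ∈ E₂, normQ Q (T x) ≤ mu * normQ Q x)
    -- Ψ is continuous with Ψ 0 = 0
    (Ψ : E → E) (hΨcont : Continuous Ψ) (hΨ0 : Ψ 0 = 0)
    -- ε and r
    (ε : ℝ) (hε : 0 < ε) (hε1 : 1 < lam - 2 * ε)
    (hε2 : 1 < (lam - 2 * ε) / (mu + 2 * ε))
    (r : ℝ) (hr : 0 < r)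
    (hLip : ∀ x y : E, ‖x‖ < r → ‖y‖ < r →
      normQ Q ((Ψ x - T x) - (Ψ y - T y)) ≤ ε * normQ Q (x - y)) :
    ∀ x y : E, ‖x‖ < r → ‖y‖ < r →
      lam * normQ Q (P₁ x - P₁ y) - ε * normQ Q (x - y) ≤
        normQ Q (P₁ (Ψ x) - P₁ (Ψ y)) := by
  have hQnn : ∀ x : E, 0 ≤ Q x x := by
    intro x
    rcases eq_or_ne x 0 with h | h
    · simp [h]
    · exact (hQpos x h).le
  -- projection uniqueness
  have hproj : ∀ a ∈ E₁, ∀ b ∈ E₂, P₁ (a + b) = a := by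
    intro a ha b hb
    have h1 : P₁ (a + b) - a = b - P₂ (a + b) := by
      rw [sub_eq_sub_iff_add_eq_add, hPsum (a + b)]; abel
    have hmem : P₁ (a + b) - a ∈ E₁ ⊓ E₂ := by
      constructor
      · exact Submodule.sub_mem _ (hP₁mem _) ha
      · rw [h1]; exact Submodule.sub_mem _ hb (hP₂mem _)
    rw [hinf] at hmem
    exact sub_eq_zero.mp (Submodule.mem_bot ℝ |>.mp hmem)
  have hPT : ∀ z : E, P₁ (T z) = T (P₁ z) := by
    intro z
    have hz : T z = T (P₁ z) + T (P₂ z) := by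
      rw [← map_add]; rw [hPsum z]
    rw [hz]
    exact hproj _ (hT₁ _ (hP₁mem z)) _ (hT₂ _ (hP₂mem z))
  -- normQ of projection
  have hPle : ∀ z : E, normQ Q (P₁ z) ≤ normQ Q z := by
    intro z
    have hdec : Q z z = Q (P₁ z) (P₁ z) + Q (P₂ z) (P₂ z) := by
      conv_lhs => rw [← hPsum z]
      have h12 : Q (P₁ z) (P₂ z) = 0 := horth _ (hP₁mem z) _ (hP₂mem z)
      have h21 : Q (P₂ z) (P₁ z) = 0 := by rw [hQsymm]; exact h12
      simp only [map_add, LinearMap.add_apply, h12, h21]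
      ring
    apply Real.sqrt_le_sqrt
    have := hQnn (P₂ z)
    linarith
  have hneg : ∀ z : E, normQ Q (-z) = normQ Q z := by
    intro z; unfold normQ; simp
  intro x y hx hy
  set d := x - y with hd
  set R := (Ψ x - T x) - (Ψ y - T y) with hR
  have hsplit : Ψ x - Ψ y = T d + R := by
    rw [hR, hd]; simp only [map_sub]; abel
  have hP₁split : P₁ (Ψ x) - P₁ (Ψ y) = T (P₁ d) + P₁ R := by
    have : P₁ (Ψ x - Ψ y) = P₁ (T d) + P₁ R := by rw [hsplit, map_add]
    rw [map_sub, hPT] at this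
    exact this
  have h1 : lam * normQ Q (P₁ d) ≤ normQ Q (T (P₁ d)) := hTexp _ (hP₁mem d)
  have h2 : normQ Q (T (P₁ d)) ≤ normQ Q (P₁ (Ψ x) - P₁ (Ψ y)) + normQ Q (P₁ R) := by
    have he : T (P₁ d) = (P₁ (Ψ x) - P₁ (Ψ y)) + -(P₁ R) := by
      rw [hP₁split]; abel
    rw [he]
    calc normQ Q ((P₁ (Ψ x) - P₁ (Ψ y)) + -(P₁ R))
        ≤ normQ Q (P₁ (Ψ x) - P₁ (Ψ y)) + normQ Q (-(P₁ R)) :=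
          normQ_triangle Q hQsymm hQnn _ _
      _ = normQ Q (P₁ (Ψ x) - P₁ (Ψ y)) + normQ Q (P₁ R) := by rw [hneg]
  have h3 : normQ Q (P₁ R) ≤ ε * normQ Q (x - y) := (hPle R).trans (hLip x y hx hy)
  have h4 : P₁ d = P₁ x - P₁ y := by rw [hd, map_sub]
  rw [h4] at h1 h2
  rw [← hd] at h3
  linarith
end

section
/- If x, y lie in the open ball B_r = {x ∈ E : ‖x‖ < r} and satisfy the cone condition ‖x₁ − y₁‖_Q ≥ ‖x₂ − y₂‖_Q, then ‖Ψ₁(x) − Ψ₁(y)‖_Q ≥ (λ − 2ε)‖x₁ − y₁‖_Q ≥ ‖Ψ₂(x) − Ψ₂(y)‖_Q; in particular the images Ψ(x), Ψ(y) again satisfy the cone condition ‖(Ψ(x) − Ψ(y))₁‖_Q ≥ ‖(Ψ(x) − Ψ(y))₂‖_Q. -/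
section aux
variable {E : Type*} [AddCommGroup E] [Module ℝ E] (Q : E →ₗ[ℝ] E →ₗ[ℝ] ℝ)

lemma Qself_nonneg (hQpos : ∀ x : E, x ≠ 0 → 0 < Q x x) (x : E) : 0 ≤ Q x x := by
  rcases eq_or_ne x 0 with h | h
  · simp [h]
  · exact (hQpos x h).le

lemma normQ_nonneg' (x : E) : 0 ≤ normQ Q x := Real.sqrt_nonneg _

lemma sq_normQ (hQpos : ∀ x : E, x ≠ 0 → 0 < Q x x) (x : E) :
    normQ Q x ^ 2 = Q x x := Real.sq_sqrt (Qself_nonneg Q hQpos x)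

lemma QCS (hQsymm : ∀ x y : E, Q x y = Q y x) (hQpos : ∀ x : E, x ≠ 0 → 0 < Q x x)
    (x y : E) : Q x y ^ 2 ≤ Q x x * Q y y := by
  rcases eq_or_ne y 0 with h | h
  · simp [h]
  · have h1 : 0 ≤ Q (Q y y • x - Q x y • y) (Q y y • x - Q x y • y) :=
      Qself_nonneg Q hQpos _
    have hy := hQpos y h
    simp only [map_sub, map_smul, LinearMap.sub_apply, LinearMap.smul_apply,
      smul_eq_mul] at h1
    rw [← hQsymm x y] at h1
    nlinarith [hy, h1, mul_pos hy hy]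

lemma QCS' (hQsymm : ∀ x y : E, Q x y = Q y x) (hQpos : ∀ x : E, x ≠ 0 → 0 < Q x x)
    (x y : E) : Q x y ≤ normQ Q x * normQ Q y := by
  have h1 := QCS Q hQsymm hQpos x y
  have h2 : (normQ Q x * normQ Q y) ^ 2 = Q x x * Q y y := by
    rw [mul_pow, sq_normQ Q hQpos, sq_normQ Q hQpos]
  nlinarith [mul_nonneg (normQ_nonneg' Q x) (normQ_nonneg' Q y),
    sq_nonneg (normQ Q x * normQ Q y - Q x y), sq_nonneg (normQ Q x * normQ Q y + Q x y)]

lemma normQ_add_le (hQsymm : ∀ x y : E, Q x y = Q y x)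
    (hQpos : ∀ x : E, x ≠ 0 → 0 < Q x x) (x y : E) :
    normQ Q (x + y) ≤ normQ Q x + normQ Q y := by
  have h1 : Q (x + y) (x + y) ≤ (normQ Q x + normQ Q y) ^ 2 := by
    have hcs := QCS' Q hQsymm hQpos x y
    have hx := sq_normQ Q hQpos x
    have hy := sq_normQ Q hQpos y
    have hexp : Q (x + y) (x + y) = Q x x + 2 * Q x y + Q y y := by
      simp only [map_add, LinearMap.add_apply]
      rw [hQsymm y x]; ring
    nlinarith
  calc normQ Q (x + y) = Real.sqrt (Q (x + y) (x + y)) := rfl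
    _ ≤ Real.sqrt ((normQ Q x + normQ Q y) ^ 2) := Real.sqrt_le_sqrt h1
    _ = normQ Q x + normQ Q y := by
        rw [Real.sqrt_sq (add_nonneg (normQ_nonneg' Q x) (normQ_nonneg' Q y))]

lemma normQ_neg (x : E) : normQ Q (-x) = normQ Q x := by
  simp [normQ]

lemma normQ_pyth (hQsymm : ∀ x y : E, Q x y = Q y x)
    (hQpos : ∀ x : E, x ≠ 0 → 0 < Q x x) (x y : E) (h : Q x y = 0) :
    normQ Q (x + y) ^ 2 = normQ Q x ^ 2 + normQ Q y ^ 2 := by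
  rw [sq_normQ Q hQpos, sq_normQ Q hQpos, sq_normQ Q hQpos]
  simp only [map_add, LinearMap.add_apply]
  rw [hQsymm y x, h]; ring

end aux


set_option maxHeartbeats 1000000 in
/-- If `x, y` lie in the open ball `B_r` and satisfy the cone condition
`‖x₁ − y₁‖_Q ≥ ‖x₂ − y₂‖_Q`, then
`‖Ψ₁ x − Ψ₁ y‖_Q ≥ (λ − 2ε)‖x₁ − y₁‖_Q ≥ ‖Ψ₂ x − Ψ₂ y‖_Q`; in particular the images
`Ψ x, Ψ y` again satisfy the cone condition. -/
theorem stmt4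
 {E : Type*} [NormedAddCommGroup E] [NormedSpace ℝ E] [CompleteSpace E]
    -- Q is a bounded symmetric positive definite bilinear form on E
    (Q : E →ₗ[ℝ] E →ₗ[ℝ] ℝ)
    (hQsymm : ∀ x y : E, Q x y = Q y x)
    (hQpos : ∀ x : E, x ≠ 0 → 0 < Q x x)
    (C_Q : ℝ) (hCQpos : 0 < C_Q)
    (hQbd : ∀ x y : E, |Q x y| ≤ C_Q * ‖x‖ * ‖y‖)
    -- E = E₁ ⊕ E₂ is a splitting into Q-orthogonal subspaces, with projections P₁, P₂
    (E₁ E₂ : Submodule ℝ E)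
    (hinf : E₁ ⊓ E₂ = ⊥) (hsup : E₁ ⊔ E₂ = ⊤)
    (horth : ∀ a ∈ E₁, ∀ b ∈ E₂, Q a b = 0)
    (P₁ P₂ : E →ₗ[ℝ] E)
    (hP₁mem : ∀ x : E, P₁ x ∈ E₁) (hP₂mem : ∀ x : E, P₂ x ∈ E₂)
    (hPsum : ∀ x : E, P₁ x + P₂ x = x)
    -- T is a bounded linear map preserving the splitting, expanding on E₁, contracting on E₂
    (T : E →L[ℝ] E)
    (hT₁ : ∀ x ∈ E₁, T x ∈ E₁) (hT₂ : ∀ x ∈ E₂, T x ∈ E₂)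
    (lam mu : ℝ) (hlam : 1 < lam) (hmu0 : 0 < mu) (hmulam : mu < lam)
    (hTexp : ∀ x ∈ E₁, lam * normQ Q x ≤ normQ Q (T x))
    (hTcon : ∀ x ∈ E₂, normQ Q (T x) ≤ mu * normQ Q x)
    -- Ψ is continuous with Ψ 0 = 0
    (Ψ : E → E) (hΨcont : Continuous Ψ) (hΨ0 : Ψ 0 = 0)
    -- ε and r
    (ε : ℝ) (hε : 0 < ε) (hε1 : 1 < lam - 2 * ε)
    (hε2 : 1 < (lam - 2 * ε) / (mu + 2 * ε))
    (r : ℝ) (hr : 0 < r)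
    (hLip : ∀ x y : E, ‖x‖ < r → ‖y‖ < r →
      normQ Q ((Ψ x - T x) - (Ψ y - T y)) ≤ ε * normQ Q (x - y)) :
    ∀ x y : E, ‖x‖ < r → ‖y‖ < r →
      normQ Q (P₂ x - P₂ y) ≤ normQ Q (P₁ x - P₁ y) →
      ((lam - 2 * ε) * normQ Q (P₁ x - P₁ y) ≤ normQ Q (P₁ (Ψ x) - P₁ (Ψ y)) ∧
        normQ Q (P₂ (Ψ x) - P₂ (Ψ y)) ≤ (lam - 2 * ε) * normQ Q (P₁ x - P₁ y)) ∧
      normQ Q (P₂ (Ψ x - Ψ y)) ≤ normQ Q (P₁ (Ψ x - Ψ y)) := by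
  -- uniqueness of decomposition
  have huniq : ∀ a ∈ E₁, ∀ b ∈ E₂, P₁ (a + b) = a ∧ P₂ (a + b) = b := by
    intro a ha b hb
    have hsum := hPsum (a + b)
    have hswap : P₁ (a + b) - a = b - P₂ (a + b) := by
      rw [sub_eq_sub_iff_add_eq_add]
      exact hsum.trans (add_comm a b)
    have hmem : P₁ (a + b) - a ∈ E₁ ⊓ E₂ := by
      constructor
      · exact Submodule.sub_mem _ (hP₁mem _) ha
      · rw [hswap]
        exact Submodule.sub_mem _ hb (hP₂mem _)
    rw [hinf] at hmem
    have h1 : P₁ (a + b) = a :=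
      sub_eq_zero.mp (Submodule.mem_bot (R := ℝ) |>.mp hmem)
    refine ⟨h1, ?_⟩
    have h2 := hsum
    rw [h1] at h2
    exact add_left_cancel h2
  intro x y hx hy hcone
  set u₁ : E := P₁ x - P₁ y with hu₁def
  set u₂ : E := P₂ x - P₂ y with hu₂def
  have hu₁mem : u₁ ∈ E₁ := Submodule.sub_mem _ (hP₁mem x) (hP₁mem y)
  have hu₂mem : u₂ ∈ E₂ := Submodule.sub_mem _ (hP₂mem x) (hP₂mem y)
  set a : ℝ := normQ Q u₁ with hadef
  set b : ℝ := normQ Q u₂ with hbdef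
  have ha0 : 0 ≤ a := normQ_nonneg' Q u₁
  have hb0 : 0 ≤ b := normQ_nonneg' Q u₂
  set Δ : E := (Ψ x - T x) - (Ψ y - T y) with hΔdef
  have hΔ : normQ Q Δ ≤ ε * normQ Q (x - y) := hLip x y hx hy
  have hxyu : x - y = u₁ + u₂ := by
    have h3 : u₁ + u₂ = (P₁ x + P₂ x) - (P₁ y + P₂ y) := by
      rw [hu₁def, hu₂def]; abel
    rw [h3, hPsum x, hPsum y]
  -- ‖x-y‖_Q ≤ 2a
  have hpyth_u : normQ Q (x - y) ^ 2 = a ^ 2 + b ^ 2 := by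
    rw [hxyu]
    exact normQ_pyth Q hQsymm hQpos u₁ u₂ (horth u₁ hu₁mem u₂ hu₂mem)
  have hxy2a : normQ Q (x - y) ≤ 2 * a := by
    nlinarith [normQ_nonneg' Q (x - y), hpyth_u, hcone, ha0, hb0]
  have hΔ2a : normQ Q Δ ≤ 2 * ε * a := by
    calc normQ Q Δ ≤ ε * normQ Q (x - y) := hΔ
      _ ≤ ε * (2 * a) := by exact mul_le_mul_of_nonneg_left hxy2a hε.le
      _ = 2 * ε * a := by ring
  -- projections of Δ are smaller
  have hΔsplit : Δ = P₁ Δ + P₂ Δ := (hPsum Δ).symm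
  have hΔpyth : normQ Q Δ ^ 2 = normQ Q (P₁ Δ) ^ 2 + normQ Q (P₂ Δ) ^ 2 := by
    conv_lhs => rw [hΔsplit]
    exact normQ_pyth Q hQsymm hQpos _ _ (horth _ (hP₁mem Δ) _ (hP₂mem Δ))
  have hΔ1 : normQ Q (P₁ Δ) ≤ 2 * ε * a := by
    nlinarith [normQ_nonneg' Q (P₁ Δ), normQ_nonneg' Q (P₂ Δ), normQ_nonneg' Q Δ, hΔ2a]
  have hΔ2 : normQ Q (P₂ Δ) ≤ 2 * ε * a := by
    nlinarith [normQ_nonneg' Q (P₁ Δ), normQ_nonneg' Q (P₂ Δ), normQ_nonneg' Q Δ, hΔ2a]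
  -- decompose T(x-y)
  have hTdec : P₁ (T (x - y)) = T u₁ ∧ P₂ (T (x - y)) = T u₂ := by
    have : T (x - y) = T u₁ + T u₂ := by rw [hxyu, map_add]
    rw [this]
    exact huniq _ (hT₁ u₁ hu₁mem) _ (hT₂ u₂ hu₂mem)
  -- Ψ x - Ψ y = T(x-y) + Δ
  have hw : Ψ x - Ψ y = T (x - y) + Δ := by
    rw [hΔdef, map_sub]; abel
  have hP₁w : P₁ (Ψ x) - P₁ (Ψ y) = T u₁ + P₁ Δ := by
    have h1 : P₁ (Ψ x) - P₁ (Ψ y) = P₁ (Ψ x - Ψ y) := (map_sub P₁ _ _).symm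
    rw [h1, hw, map_add, hTdec.1]
  have hP₂w : P₂ (Ψ x) - P₂ (Ψ y) = T u₂ + P₂ Δ := by
    have h1 : P₂ (Ψ x) - P₂ (Ψ y) = P₂ (Ψ x - Ψ y) := (map_sub P₂ _ _).symm
    rw [h1, hw, map_add, hTdec.2]
  -- lower bound
  have hTu₁ := hTexp u₁ hu₁mem
  have hlow : (lam - 2 * ε) * a ≤ normQ Q (P₁ (Ψ x) - P₁ (Ψ y)) := by
    have htri : normQ Q (T u₁) ≤ normQ Q (P₁ (Ψ x) - P₁ (Ψ y)) + normQ Q (P₁ Δ) := by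
      have heq : T u₁ = (T u₁ + P₁ Δ) + (-(P₁ Δ)) := by abel
      calc normQ Q (T u₁) = normQ Q ((T u₁ + P₁ Δ) + (-(P₁ Δ))) := by rw [← heq]
        _ ≤ normQ Q (T u₁ + P₁ Δ) + normQ Q (-(P₁ Δ)) :=
            normQ_add_le Q hQsymm hQpos _ _
        _ = normQ Q (P₁ (Ψ x) - P₁ (Ψ y)) + normQ Q (P₁ Δ) := by
            rw [← hP₁w, normQ_neg]
    linarith
  -- upper bound for P₂
  have hTu₂ := hTcon u₂ hu₂mem
  have hhigh : normQ Q (P₂ (Ψ x) - P₂ (Ψ y)) ≤ (mu + 2 * ε) * a := by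
    calc normQ Q (P₂ (Ψ x) - P₂ (Ψ y)) = normQ Q (T u₂ + P₂ Δ) := by rw [hP₂w]
      _ ≤ normQ Q (T u₂) + normQ Q (P₂ Δ) := normQ_add_le Q hQsymm hQpos _ _
      _ ≤ mu * b + 2 * ε * a := by linarith
      _ ≤ (mu + 2 * ε) * a := by nlinarith [hcone]
  have hmul2 : mu + 2 * ε ≤ lam - 2 * ε := by
    have hpos : 0 < mu + 2 * ε := by linarith
    have := (one_lt_div hpos).mp hε2
    linarith
  have hhigh' : normQ Q (P₂ (Ψ x) - P₂ (Ψ y)) ≤ (lam - 2 * ε) * a := by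
    calc normQ Q (P₂ (Ψ x) - P₂ (Ψ y)) ≤ (mu + 2 * ε) * a := hhigh
      _ ≤ (lam - 2 * ε) * a := by nlinarith
  refine ⟨⟨hlow, hhigh'⟩, ?_⟩
  rw [map_sub P₁, map_sub P₂]
  calc normQ Q (P₂ (Ψ x) - P₂ (Ψ y)) ≤ (lam - 2 * ε) * a := hhigh'
    _ ≤ normQ Q (P₁ (Ψ x) - P₁ (Ψ y)) := hlow
end

section
/- Let W = {x in the closed ball of radius r : Ψⁿ(x) lies in the closed ball of radius r for all n ≥ 0}, and let W₂ = P₂(W) ⊆ E₂. Then there is a map u : W₂ → E₁ such that W = {u(a) + a : a ∈ W₂} (i.e., W is the graph of u over W₂) and u is Q-Lipschitz with norm one: ‖u(a) − u(b)‖_Q ≤ ‖a − b‖_Q for all a, b ∈ W₂. -/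
/-- The set of points whose `Ψ`-trajectories never leave the closed ball of radius `r`
(the case `n = 0` says the point itself lies in the closed ball). -/
def invariantSet {E : Type*} [NormedAddCommGroup E] (Ψ : E → E) (r : ℝ) : Set E :=
  {x : E | ∀ n : ℕ, ‖Ψ^[n] x‖ ≤ r}

/-- Let `W = {x in the closed ball of radius r : Ψⁿ x stays in the closed
ball for all n ≥ 0}`, and let `W₂ = P₂(W) ⊆ E₂`. Then there is `u : W₂ → E₁` such that `W`
is the graph `{u a + a : a ∈ W₂}` of `u` over `W₂`, and `u` is `Q`-Lipschitz with norm one. -/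
theorem stmt7
 {E : Type*} [NormedAddCommGroup E] [NormedSpace ℝ E] [CompleteSpace E]
    -- Q is a bounded symmetric positive definite bilinear form on E
    (Q : E →ₗ[ℝ] E →ₗ[ℝ] ℝ)
    (hQsymm : ∀ x y : E, Q x y = Q y x)
    (hQpos : ∀ x : E, x ≠ 0 → 0 < Q x x)
    (C_Q : ℝ) (hCQpos : 0 < C_Q)
    (hQbd : ∀ x y : E, |Q x y| ≤ C_Q * ‖x‖ * ‖y‖)
    -- E = E₁ ⊕ E₂ is a splitting into Q-orthogonal subspaces, with projections P₁, P₂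
    (E₁ E₂ : Submodule ℝ E)
    (hinf : E₁ ⊓ E₂ = ⊥) (hsup : E₁ ⊔ E₂ = ⊤)
    (horth : ∀ a ∈ E₁, ∀ b ∈ E₂, Q a b = 0)
    (P₁ P₂ : E →ₗ[ℝ] E)
    (hP₁mem : ∀ x : E, P₁ x ∈ E₁) (hP₂mem : ∀ x : E, P₂ x ∈ E₂)
    (hPsum : ∀ x : E, P₁ x + P₂ x = x)
    -- T is a bounded linear map preserving the splitting, expanding on E₁, contracting on E₂
    (T : E →L[ℝ] E)
    (hT₁ : ∀ x ∈ E₁, T x ∈ E₁) (hT₂ : ∀ x ∈ E₂, T x ∈ E₂)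
    (lam mu : ℝ) (hlam : 1 < lam) (hmu0 : 0 < mu) (hmulam : mu < lam)
    (hTexp : ∀ x ∈ E₁, lam * normQ Q x ≤ normQ Q (T x))
    (hTcon : ∀ x ∈ E₂, normQ Q (T x) ≤ mu * normQ Q x)
    -- Ψ is continuous with Ψ 0 = 0
    (Ψ : E → E) (hΨcont : Continuous Ψ) (hΨ0 : Ψ 0 = 0)
    -- ε and r
    (ε : ℝ) (hε : 0 < ε) (hε1 : 1 < lam - 2 * ε)
    (hε2 : 1 < (lam - 2 * ε) / (mu + 2 * ε))
    (r : ℝ) (hr : 0 < r)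
    (hLip : ∀ x y : E, ‖x‖ ≤ r → ‖y‖ ≤ r →
      normQ Q ((Ψ x - T x) - (Ψ y - T y)) ≤ ε * normQ Q (x - y)) :
    ∃ u : E → E,
      (∀ a ∈ P₂ '' invariantSet Ψ r, u a ∈ E₁) ∧
      invariantSet Ψ r = (fun a => u a + a) '' (P₂ '' invariantSet Ψ r) ∧
      ∀ a ∈ P₂ '' invariantSet Ψ r, ∀ b ∈ P₂ '' invariantSet Ψ r,
        normQ Q (u a - u b) ≤ normQ Q (a - b) := by
  classical
  -- basic facts about Q and normQ
  have hQnn : ∀ z : E, 0 ≤ Q z z := by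
    intro z
    by_cases h : z = 0
    · simp [h]
    · exact (hQpos z h).le
  have hnn : ∀ z : E, 0 ≤ normQ Q z := fun z => Real.sqrt_nonneg _
  have hzero : ∀ z : E, normQ Q z = 0 → z = 0 := by
    intro z h
    by_contra hz
    have h1 : 0 < Real.sqrt (Q z z) := Real.sqrt_pos.mpr (hQpos z hz)
    exact absurd h (by simpa [normQ] using h1.ne')
  have hsq : ∀ z : E, Q z z = (normQ Q z) ^ 2 := fun z => (Real.sq_sqrt (hQnn z)).symm
  have hCS : ∀ x y : E, Q x y ≤ normQ Q x * normQ Q y := by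
    intro x y
    have hquad : ∀ t : ℝ, 0 ≤ Q y y * (t * t) + (2 * Q x y) * t + Q x x := by
      intro t
      have h0 := hQnn (x + t • y)
      have e : Q (x + t • y) (x + t • y)
          = Q y y * (t * t) + (2 * Q x y) * t + Q x x := by
        simp only [map_add, map_smul, LinearMap.add_apply, LinearMap.smul_apply,
          smul_eq_mul]
        rw [hQsymm y x]; ring
      rw [e] at h0; exact h0
    have hd := discrim_le_zero (a := Q y y) (b := 2 * Q x y) (c := Q x x) hquad
    unfold discrim at hd
    have h2 : Q x y ^ 2 ≤ Q x x * Q y y := by nlinarith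
    calc Q x y ≤ |Q x y| := le_abs_self _
      _ = Real.sqrt (Q x y ^ 2) := (Real.sqrt_sq_eq_abs _).symm
      _ ≤ Real.sqrt (Q x x * Q y y) := Real.sqrt_le_sqrt h2
      _ = normQ Q x * normQ Q y := Real.sqrt_mul (hQnn x) _
  have htri : ∀ x y : E, normQ Q (x + y) ≤ normQ Q x + normQ Q y := by
    intro x y
    have e : Q (x + y) (x + y) = Q x x + 2 * Q x y + Q y y := by
      simp only [map_add, LinearMap.add_apply]
      rw [hQsymm y x]; ring
    have h2 : Q (x + y) (x + y) ≤ (normQ Q x + normQ Q y) ^ 2 := by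
      rw [e, hsq x, hsq y]; nlinarith [hCS x y]
    calc normQ Q (x + y) = Real.sqrt (Q (x + y) (x + y)) := rfl
      _ ≤ Real.sqrt ((normQ Q x + normQ Q y) ^ 2) := Real.sqrt_le_sqrt h2
      _ = normQ Q x + normQ Q y := Real.sqrt_sq (by have := hnn x; have := hnn y; linarith)
  have hneg : ∀ z : E, normQ Q (-z) = normQ Q z := by
    intro z; simp [normQ]
  have hrevtri : ∀ x y : E, normQ Q x - normQ Q y ≤ normQ Q (x + y) := by
    intro x y
    have h := htri (x + y) (-y)
    simp only [add_neg_cancel_right] at h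
    rw [hneg] at h
    linarith
  have hnormle : ∀ z : E, normQ Q z ≤ Real.sqrt C_Q * ‖z‖ := by
    intro z
    have h1 : Q z z ≤ C_Q * ‖z‖ ^ 2 := by
      have h2 := hQbd z z
      have h3 := le_abs_self (Q z z)
      nlinarith
    calc normQ Q z = Real.sqrt (Q z z) := rfl
      _ ≤ Real.sqrt (C_Q * ‖z‖ ^ 2) := Real.sqrt_le_sqrt h1
      _ = Real.sqrt C_Q * ‖z‖ := by
          rw [Real.sqrt_mul hCQpos.le, Real.sqrt_sq (norm_nonneg z)]
  -- projection identities
  -- projection identities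
  have hP₁E₂ : ∀ b ∈ E₂, P₁ b = 0 := by
    intro b hb
    have h2 : P₁ b = b - P₂ b := eq_sub_of_add_eq (hPsum b)
    have h3 : P₁ b ∈ E₂ := h2 ▸ sub_mem hb (hP₂mem b)
    have h4 : P₁ b ∈ E₁ ⊓ E₂ := ⟨hP₁mem b, h3⟩
    rw [hinf] at h4
    exact (Submodule.mem_bot ℝ).mp h4
  have hP₂E₁ : ∀ a ∈ E₁, P₂ a = 0 := by
    intro a ha
    have h2 : P₂ a = a - P₁ a := eq_sub_of_add_eq' (hPsum a)
    have h3 : P₂ a ∈ E₁ := h2 ▸ sub_mem ha (hP₁mem a)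
    have h4 : P₂ a ∈ E₁ ⊓ E₂ := ⟨h3, hP₂mem a⟩
    rw [hinf] at h4
    exact (Submodule.mem_bot ℝ).mp h4
  have hP₁E₁ : ∀ a ∈ E₁, P₁ a = a := by
    intro a ha
    have h := hPsum a
    rw [hP₂E₁ a ha, add_zero] at h
    exact h
  have hP₂E₂ : ∀ b ∈ E₂, P₂ b = b := by
    intro b hb
    have h := hPsum b
    rw [hP₁E₂ b hb, zero_add] at h
    exact h
  have hP₁T : ∀ z : E, P₁ (T z) = T (P₁ z) := by
    intro z
    have h1 : T z = T (P₁ z) + T (P₂ z) := by rw [← map_add, hPsum]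
    rw [h1, map_add, hP₁E₁ _ (hT₁ _ (hP₁mem z)), hP₁E₂ _ (hT₂ _ (hP₂mem z)), add_zero]
  have hP₂T : ∀ z : E, P₂ (T z) = T (P₂ z) := by
    intro z
    have h1 : T z = T (P₁ z) + T (P₂ z) := by rw [← map_add, hPsum]
    rw [h1, map_add, hP₂E₁ _ (hT₁ _ (hP₁mem z)), hP₂E₂ _ (hT₂ _ (hP₂mem z)), zero_add]
  -- orthogonal splitting of the Q-norm
  have hQsplit : ∀ z : E, Q z z = Q (P₁ z) (P₁ z) + Q (P₂ z) (P₂ z) := by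
    intro z
    conv_lhs => rw [← hPsum z]
    simp only [map_add, LinearMap.add_apply]
    rw [horth _ (hP₁mem z) _ (hP₂mem z), hQsymm (P₂ z) (P₁ z),
      horth _ (hP₁mem z) _ (hP₂mem z)]
    ring
  have hPle₁ : ∀ z : E, normQ Q (P₁ z) ≤ normQ Q z := by
    intro z
    apply Real.sqrt_le_sqrt
    have := hQnn (P₂ z)
    rw [hQsplit z]; linarith
  have hPle₂ : ∀ z : E, normQ Q (P₂ z) ≤ normQ Q z := by
    intro z
    apply Real.sqrt_le_sqrt
    have := hQnn (P₁ z)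
    rw [hQsplit z]; linarith
  have hsumtri : ∀ z : E, normQ Q z ≤ normQ Q (P₁ z) + normQ Q (P₂ z) := by
    intro z
    conv_lhs => rw [← hPsum z]
    exact htri _ _
  -- key cone estimate on the invariant set
  have key : ∀ x ∈ invariantSet Ψ r, ∀ y ∈ invariantSet Ψ r,
      normQ Q (P₁ (x - y)) ≤ normQ Q (P₂ (x - y)) := by
    intro x hx y hy
    by_contra hcon
    push_neg at hcon
    have hc : 0 < normQ Q (P₁ (x - y)) := lt_of_le_of_lt (hnn _) hcon
    have hLpos : (0:ℝ) < lam - 2 * ε := by linarith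
    have hmu2 : mu + 2 * ε ≤ lam - 2 * ε := by
      have hpos : (0:ℝ) < mu + 2 * ε := by linarith
      rw [lt_div_iff₀ hpos] at hε2
      linarith
    have claim : ∀ n : ℕ,
        normQ Q (P₂ (Ψ^[n] x - Ψ^[n] y)) ≤ normQ Q (P₁ (Ψ^[n] x - Ψ^[n] y)) ∧
        (lam - 2 * ε) ^ n * normQ Q (P₁ (x - y))
          ≤ normQ Q (P₁ (Ψ^[n] x - Ψ^[n] y)) := by
      intro n
      induction n with
      | zero => exact ⟨hcon.le, by simp⟩
      | succ n ih =>
        obtain ⟨hcone, hgrow⟩ := ih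
        set xn := Ψ^[n] x with hxn_def
        set yn := Ψ^[n] y with hyn_def
        set d := xn - yn with hd_def
        have hxnr : ‖xn‖ ≤ r := hx n
        have hynr : ‖yn‖ ≤ r := hy n
        have hR : normQ Q ((Ψ xn - T xn) - (Ψ yn - T yn)) ≤ ε * normQ Q d :=
          hLip xn yn hxnr hynr
        set R := (Ψ xn - T xn) - (Ψ yn - T yn) with hR_def
        have hd' : Ψ^[n+1] x - Ψ^[n+1] y = T d + R := by
          rw [Function.iterate_succ_apply', Function.iterate_succ_apply',
            ← hxn_def, ← hyn_def, hR_def, hd_def, map_sub]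
          abel
        have hdle : normQ Q d ≤ 2 * normQ Q (P₁ d) := by
          have := hsumtri d
          linarith
        have hRle : normQ Q R ≤ 2 * ε * normQ Q (P₁ d) := by
          calc normQ Q R ≤ ε * normQ Q d := hR
            _ ≤ ε * (2 * normQ Q (P₁ d)) := by
                exact mul_le_mul_of_nonneg_left hdle hε.le
            _ = 2 * ε * normQ Q (P₁ d) := by ring
        have e1 : P₁ (Ψ^[n+1] x - Ψ^[n+1] y) = T (P₁ d) + P₁ R := by
          rw [hd', map_add, hP₁T]
        have e2 : P₂ (Ψ^[n+1] x - Ψ^[n+1] y) = T (P₂ d) + P₂ R := by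
          rw [hd', map_add, hP₂T]
        have hP1R : normQ Q (P₁ R) ≤ 2 * ε * normQ Q (P₁ d) :=
          le_trans (hPle₁ R) hRle
        have hP2R : normQ Q (P₂ R) ≤ 2 * ε * normQ Q (P₁ d) :=
          le_trans (hPle₂ R) hRle
        have hlow : (lam - 2 * ε) * normQ Q (P₁ d)
            ≤ normQ Q (P₁ (Ψ^[n+1] x - Ψ^[n+1] y)) := by
          have h1 : lam * normQ Q (P₁ d) ≤ normQ Q (T (P₁ d)) :=
            hTexp _ (hP₁mem d)
          have h2 : normQ Q (T (P₁ d)) - normQ Q (P₁ R)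
              ≤ normQ Q (T (P₁ d) + P₁ R) := hrevtri _ _
          rw [e1]
          linarith
        refine ⟨?_, ?_⟩
        · have h3 : normQ Q (T (P₂ d)) ≤ mu * normQ Q (P₂ d) :=
            hTcon _ (hP₂mem d)
          have h4 : mu * normQ Q (P₂ d) ≤ mu * normQ Q (P₁ d) :=
            mul_le_mul_of_nonneg_left hcone hmu0.le
          have h5 : normQ Q (T (P₂ d) + P₂ R)
              ≤ normQ Q (T (P₂ d)) + normQ Q (P₂ R) := htri _ _
          rw [e2]
          have hnnP1 : 0 ≤ normQ Q (P₁ d) := hnn _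
          have : normQ Q (T (P₂ d) + P₂ R) ≤ (lam - 2 * ε) * normQ Q (P₁ d) := by
            nlinarith
          linarith
        · have hstep : (lam - 2 * ε) ^ n * normQ Q (P₁ (x - y)) ≤ normQ Q (P₁ d) := by
            rw [hd_def]; exact hgrow
          calc (lam - 2 * ε) ^ (n+1) * normQ Q (P₁ (x - y))
              = (lam - 2 * ε) * ((lam - 2 * ε) ^ n * normQ Q (P₁ (x - y))) := by ring
            _ ≤ (lam - 2 * ε) * normQ Q (P₁ d) :=
                mul_le_mul_of_nonneg_left hstep hLpos.le
            _ ≤ _ := hlow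
    -- derive a contradiction from unboundedness
    have hT₁hT := hTexp
    obtain ⟨n, hn⟩ := pow_unbounded_of_one_lt
      ((Real.sqrt C_Q * (2 * r)) / normQ Q (P₁ (x - y))) hε1
    have hgrow := (claim n).2
    have hbd : normQ Q (P₁ (Ψ^[n] x - Ψ^[n] y)) ≤ Real.sqrt C_Q * (2 * r) := by
      calc normQ Q (P₁ (Ψ^[n] x - Ψ^[n] y)) ≤ normQ Q (Ψ^[n] x - Ψ^[n] y) := hPle₁ _
        _ ≤ Real.sqrt C_Q * ‖Ψ^[n] x - Ψ^[n] y‖ := hnormle _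
        _ ≤ Real.sqrt C_Q * (2 * r) := by
            apply mul_le_mul_of_nonneg_left _ (Real.sqrt_nonneg _)
            calc ‖Ψ^[n] x - Ψ^[n] y‖ ≤ ‖Ψ^[n] x‖ + ‖Ψ^[n] y‖ := norm_sub_le _ _
              _ ≤ 2 * r := by have := hx n; have := hy n; linarith
    rw [div_lt_iff₀ hc] at hn
    linarith
  -- injectivity of P₂ on the invariant set
  have hinj : ∀ x ∈ invariantSet Ψ r, ∀ y ∈ invariantSet Ψ r, P₂ x = P₂ y → x = y := by
    intro x hx y hy h
    have h2 : P₂ (x - y) = 0 := by rw [map_sub, h, sub_self]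
    have h1 := key x hx y hy
    rw [h2] at h1
    have h0 : normQ Q (0 : E) = 0 := by simp [normQ]
    rw [h0] at h1
    have hp1 : P₁ (x - y) = 0 := hzero _ (le_antisymm h1 (hnn _))
    have hs := hPsum (x - y)
    rw [hp1, h2, add_zero] at hs
    exact sub_eq_zero.mp hs.symm
  -- construct u
  set u : E → E :=
    fun a => if h : a ∈ P₂ '' invariantSet Ψ r then P₁ h.choose else 0 with hu_def
  have hu : ∀ x ∈ invariantSet Ψ r, u (P₂ x) = P₁ x := by
    intro x hx
    have h : P₂ x ∈ P₂ '' invariantSet Ψ r := ⟨x, hx, rfl⟩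
    have hspec := h.choose_spec
    rw [hu_def]
    simp only [dif_pos h]
    rw [hinj _ hspec.1 _ hx hspec.2]
  refine ⟨u, ?_, ?_, ?_⟩
  · rintro a ⟨x, hx, rfl⟩
    rw [hu x hx]
    exact hP₁mem x
  · ext z
    constructor
    · intro hz
      exact ⟨P₂ z, ⟨z, hz, rfl⟩, by show u (P₂ z) + P₂ z = z; rw [hu z hz, hPsum z]⟩
    · rintro ⟨a, ⟨x, hx, rfl⟩, rfl⟩
      show u (P₂ x) + P₂ x ∈ invariantSet Ψ r
      rw [hu x hx, hPsum x]
      exact hx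
  · rintro a ⟨x, hx, rfl⟩ b ⟨y, hy, rfl⟩
    rw [hu x hx, hu y hy, ← map_sub, ← map_sub]
    exact key x hx y hy
end
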